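/- arXiv:1306.6031 — 3 statements merged into one kernel-verified Lean document; each statement's English description precedes it below -/
import Mathlib

section
/- Let $A \in \mathbb{Z}^{m \times n}$, $b \in \mathbb{Z}^m$, $\lambda \in \mathbb{Q}^m_{\geq 0}$ with $\lambda^T A \in \mathbb{Z}^n$, $x^* \in \mathbb{R}^n$ with $Ax^* \le b$ and $\lambda^T(b - Ax^*) = 0$, and let $t$ be a positive integer. Then $(t\lambda \bmod 1)^T A \in \mathbb{Z}^n$, and if $\{t \lambda^T b\} > 0$ then the iterated CG-cut $((t\lambda \bmod 1)^T A)x \le \lfloor (t\lambda \bmod 1)^T b \rfloor$ is violated by $x^*$. -/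
/-!
Write `μ = tλ mod 1`. Since `μ = tλ - ⌊tλ⌋` with `t` and `⌊tλ⌋` integral, `μᵀ a` differs from
`t λᵀ a` by an integer for every integral vector `a`; this gives the integrality of `μᵀ A` and
`{μᵀ b} = {t λᵀ b}`. Moreover `μ` is supported where `λ` is, so complementary slackness
`λᵀ (b - A x*) = 0` passes to `μ`, and `μᵀ A x* = μᵀ b > ⌊μᵀ b⌋` as soon as `{μᵀ b} > 0`.
-/

open Finset

section FloorRing

variable {ι R : Type*} [Fintype ι] [CommRing R] [LinearOrder R] [FloorRing R]

lemma sum_fract_mul_intCast (t : ℤ) (lam : ι → R) (a : ι → ℤ) :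
    ∑ i, Int.fract (t * lam i) * (a i : R) =
      t * ∑ i, lam i * a i - ((∑ i, ⌊(t : R) * lam i⌋ * a i : ℤ) : R) := by
  push_cast
  rw [mul_sum, ← sum_sub_distrib]
  refine sum_congr rfl fun i _ => ?_
  rw [Int.fract]
  ring

lemma exists_sum_fract_mul_eq_intCast (t : ℤ) {lam : ι → R} {a : ι → ℤ}
    (h : ∃ k : ℤ, ∑ i, lam i * a i = k) :
    ∃ k : ℤ, ∑ i, Int.fract (t * lam i) * a i = k := by
  obtain ⟨k, hk⟩ := h
  refine ⟨t * k - ∑ i, ⌊(t : R) * lam i⌋ * a i, ?_⟩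
  rw [sum_fract_mul_intCast, hk]
  push_cast
  ring

lemma fract_sum_fract_mul_intCast [IsOrderedRing R] (t : ℤ) (lam : ι → R) (a : ι → ℤ) :
    Int.fract (∑ i, Int.fract (t * lam i) * (a i : R)) = Int.fract (t * ∑ i, lam i * a i) := by
  rw [sum_fract_mul_intCast, Int.fract_sub_intCast]

end FloorRing

lemma sum_mul_eq_zero_of_complementary_slackness {ι R : Type*} [Fintype ι] [CommRing R]
    [LinearOrder R] [IsStrictOrderedRing R] {lam mu s : ι → R} (hlam : ∀ i, 0 ≤ lam i)
    (hs : ∀ i, 0 ≤ s i) (h : ∑ i, lam i * s i = 0) (hmu : ∀ i, lam i = 0 → mu i = 0) :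
    ∑ i, mu i * s i = 0 := by
  have hterm := (sum_eq_zero_iff_of_nonneg fun i _ => mul_nonneg (hlam i) (hs i)).1 h
  refine sum_eq_zero fun i hi => ?_
  rcases mul_eq_zero.1 (hterm i hi) with hl | hs0
  · rw [hmu i hl, zero_mul]
  · rw [hs0, mul_zero]

lemma floor_lt_of_complementary_slackness {ι κ R : Type*} [Fintype ι] [Fintype κ] [CommRing R]
    [LinearOrder R] [IsStrictOrderedRing R] [FloorRing R] (A : ι → κ → ℤ) (b : ι → ℤ)
    {lam : ι → R} (hlam : ∀ i, 0 ≤ lam i) {x : κ → R} (hx : ∀ i, ∑ j, (A i j : R) * x j ≤ b i)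
    (htight : ∑ i, lam i * (b i - ∑ j, (A i j : R) * x j) = 0) (t : ℤ)
    (hpos : 0 < Int.fract (t * ∑ i, lam i * b i)) :
    ⌊∑ i, Int.fract (t * lam i) * (b i : R)⌋ <
      ∑ j, (∑ i, Int.fract (t * lam i) * (A i j : R)) * x j := by
  have hslack : ∑ i, Int.fract (t * lam i) * (b i - ∑ j, (A i j : R) * x j) = 0 :=
    sum_mul_eq_zero_of_complementary_slackness hlam (fun i => sub_nonneg.2 (hx i)) htight
      (fun i hi => by rw [hi, mul_zero, Int.fract_zero])
  have hlhs : ∑ j, (∑ i, Int.fract (t * lam i) * (A i j : R)) * x j =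
      ∑ i, Int.fract (t * lam i) * (b i : R) := by
    simp only [mul_sub, sum_sub_distrib, sub_eq_zero] at hslack
    rw [hslack]
    simp only [sum_mul, mul_sum, mul_assoc]
    exact sum_comm
  rw [hlhs]
  refine (Int.floor_le _).lt_of_ne' (Int.fract_pos.1 ?_)
  rwa [fract_sum_fract_mul_intCast]

theorem iterated_cg_cut_general (m n : ℕ) (A : Matrix (Fin m) (Fin n) ℤ) (b : Fin m → ℤ)
    (lam : Fin m → ℚ) (hlam : ∀ i, 0 ≤ lam i)
    (hint : ∀ j : Fin n, ∃ k : ℤ, ∑ i, lam i * (A i j : ℚ) = (k : ℚ))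
    (xs : Fin n → ℝ) (hxs : ∀ i, ∑ j, (A i j : ℝ) * xs j ≤ (b i : ℝ))
    (htight : ∑ i, (lam i : ℝ) * ((b i : ℝ) - ∑ j, (A i j : ℝ) * xs j) = 0)
    (t : ℤ) :
    (∀ j : Fin n, ∃ k : ℤ, ∑ i, Int.fract ((t : ℚ) * lam i) * (A i j : ℚ) = (k : ℚ)) ∧
    (Int.fract ((t : ℚ) * ∑ i, lam i * (b i : ℚ)) > 0 →
      ∑ j, (∑ i, (Int.fract ((t : ℚ) * lam i) : ℝ) * (A i j : ℝ)) * xs j >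
        (⌊∑ i, Int.fract ((t : ℚ) * lam i) * (b i : ℚ)⌋ : ℝ)) := by
  refine ⟨fun j => exists_sum_fract_mul_eq_intCast t (hint j), fun hpos => ?_⟩
  -- The cast `(Int.fract ((t : ℚ) * lam i) : ℝ)` elaborates to `Int.fract` taken in `ℝ`,
  -- so the cut is proved over `ℝ` and the rational floor is moved there.
  have hcut := floor_lt_of_complementary_slackness A b (fun i => by exact_mod_cast hlam i) hxs
    htight t (by exact_mod_cast hpos)
  rw [gt_iff_lt, ← Rat.floor_cast (α := ℝ)]
  push_cast [Rat.cast_fract]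
  exact hcut

/-- Iterated CG-cuts: `t·λ mod 1` again gives integral left-hand side, and if the
rounding effect is positive the iterated cut is violated by `x*`. -/
theorem iterated_cg_cut (m n : ℕ) (A : Matrix (Fin m) (Fin n) ℤ) (b : Fin m → ℤ)
    (lam : Fin m → ℚ) (hlam : ∀ i, 0 ≤ lam i)
    (hint : ∀ j : Fin n, ∃ k : ℤ, ∑ i, lam i * (A i j : ℚ) = (k : ℚ))
    (xs : Fin n → ℝ) (hxs : ∀ i, ∑ j, (A i j : ℝ) * xs j ≤ (b i : ℝ))
    (htight : ∑ i, (lam i : ℝ) * ((b i : ℝ) - ∑ j, (A i j : ℝ) * xs j) = 0)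
    (t : ℤ) (ht : 0 < t) :
    (∀ j : Fin n, ∃ k : ℤ, ∑ i, Int.fract ((t : ℚ) * lam i) * (A i j : ℚ) = (k : ℚ)) ∧
    (Int.fract ((t : ℚ) * ∑ i, lam i * (b i : ℚ)) > 0 →
      ∑ j, (∑ i, (Int.fract ((t : ℚ) * lam i) : ℝ) * (A i j : ℝ)) * xs j >
        (⌊∑ i, Int.fract ((t : ℚ) * lam i) * (b i : ℚ)⌋ : ℝ)) :=
  iterated_cg_cut_general m n A b lam hlam hint xs hxs htight t
end

section
/- Let $a \in \mathbb{Z}^{d+1}$ have positive coprime entries with $a_{d+1} = \max_i a_i$, let $\Lambda_a = \{x \in \mathbb{Z}^{d+1} : x^T a = 0\}$ and $M_a = \pi_{d+1}(\Lambda_a)$. Then $\lambda_1(\Lambda_a) \leq \sqrt{d+1} \cdot \lambda_1(M_a)$, where $\lambda_1$ denotes the first successive minimum (the length of a shortest nonzero lattice vector) with respect to the Euclidean norm. -/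
/-!
Let `x ∈ Λ_a` and let `y` be its first `d` coordinates. From `x_{d+1} a_{d+1} = -∑_{i ≤ d} x_i a_i`
and `|a_i| ≤ a_{d+1}` we get `|x_{d+1}| ≤ ‖y‖₁ ≤ √d ‖y‖`, hence `‖x‖ ≤ √(d+1) ‖y‖`. In particular
`x` vanishes when `y` does, so lifting a shortest vector of `M_a` gives the bound.
-/

/-- The first successive minimum (length of a shortest nonzero vector) of a
subset of `ℝ^n` (Euclidean norm). -/
noncomputable def firstMin (n : ℕ) (L : Set (EuclideanSpace ℝ (Fin n))) : ℝ :=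
  sInf {r : ℝ | ∃ x ∈ L, x ≠ 0 ∧ ‖x‖ = r}

open Finset

theorem abs_last_le_sum_abs_castSucc {R : Type*} [CommRing R] [LinearOrder R]
    [IsStrictOrderedRing R] {d : ℕ} {v a : Fin (d + 1) → R} (hv : ∑ i, v i * a i = 0)
    (ha : ∀ i, |a i| ≤ |a (Fin.last d)|) (hlast : a (Fin.last d) ≠ 0) :
    |v (Fin.last d)| ≤ ∑ i : Fin d, |v i.castSucc| := by
  rw [Fin.sum_univ_castSucc, add_eq_zero_iff_eq_neg'] at hv
  refine le_of_mul_le_mul_right ?_ (abs_pos.mpr hlast)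
  calc |v (Fin.last d)| * |a (Fin.last d)|
      = |∑ i : Fin d, v i.castSucc * a i.castSucc| := by rw [← abs_mul, hv, abs_neg]
    _ ≤ ∑ i : Fin d, |v i.castSucc| * |a i.castSucc| := by
      simpa only [abs_mul] using
        abs_sum_le_sum_abs (fun i : Fin d => v i.castSucc * a i.castSucc) univ
    _ ≤ (∑ i : Fin d, |v i.castSucc|) * |a (Fin.last d)| := by
      rw [sum_mul]
      exact sum_le_sum fun i _ => mul_le_mul_of_nonneg_left (ha _) (abs_nonneg _)

theorem EuclideanSpace.norm_le_sqrt_mul_norm_castSucc {d : ℕ}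
    (x : EuclideanSpace ℝ (Fin (d + 1))) (y : EuclideanSpace ℝ (Fin d)) (hy : ∀ i, y i = x i.castSucc)
    (hlast : |x (Fin.last d)| ≤ ∑ i, |y i|) :
    ‖x‖ ≤ √(d + 1) * ‖y‖ := by
  have hnorm1 : (∑ i, |y i|) ^ 2 ≤ d * ‖y‖ ^ 2 := by
    simpa [EuclideanSpace.real_norm_sq_eq] using
      sq_sum_le_card_mul_sum_sq (s := univ) (f := (|y ·|))
  have hsq : ‖x‖ ^ 2 ≤ (d + 1) * ‖y‖ ^ 2 := by
    have hx : ‖x‖ ^ 2 = ‖y‖ ^ 2 + x (Fin.last d) ^ 2 := by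
      simp [EuclideanSpace.real_norm_sq_eq, Fin.sum_univ_castSucc, hy]
    nlinarith [sq_le_sq' (neg_le_of_abs_le hlast) (le_of_abs_le hlast)]
  rw [← Real.sqrt_sq (norm_nonneg x), ← Real.sqrt_sq (norm_nonneg y),
    ← Real.sqrt_mul (by positivity)]
  exact Real.sqrt_le_sqrt hsq

theorem firstMin_le_mul_of_forall_exists {m n : ℕ} {L : Set (EuclideanSpace ℝ (Fin m))}
    {M : Set (EuclideanSpace ℝ (Fin n))} {c : ℝ} (hc : 0 ≤ c)
    (hL : ∀ x ∈ L, x ≠ 0 → ∃ y ∈ M, y ≠ 0)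
    (hM : ∀ y ∈ M, y ≠ 0 → ∃ x ∈ L, x ≠ 0 ∧ ‖x‖ ≤ c * ‖y‖) :
    firstMin m L ≤ c * firstMin n M := by
  unfold firstMin
  rcases Set.eq_empty_or_nonempty {r : ℝ | ∃ y ∈ M, y ≠ 0 ∧ ‖y‖ = r} with hMe | ⟨r, hr⟩
  · -- junk value: both sets of norms are empty and `sInf ∅ = 0`
    have hLe : {r : ℝ | ∃ x ∈ L, x ≠ 0 ∧ ‖x‖ = r} = ∅ := by
      refine Set.eq_empty_of_forall_notMem ?_
      rintro _ ⟨x, hx, hx0, rfl⟩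
      obtain ⟨y, hy, hy0⟩ := hL x hx hx0
      exact hMe.subset ⟨y, hy, hy0, rfl⟩
    simp [hLe, hMe]
  · have hbdd : BddBelow {r : ℝ | ∃ x ∈ L, x ≠ 0 ∧ ‖x‖ = r} :=
      ⟨0, by rintro _ ⟨x, -, -, rfl⟩; exact norm_nonneg x⟩
    rw [← smul_eq_mul, ← Real.sInf_smul_of_nonneg hc]
    refine le_csInf ⟨c • r, Set.smul_mem_smul_set hr⟩ ?_
    rintro _ ⟨_, ⟨y, hy, hy0, rfl⟩, rfl⟩
    obtain ⟨x, hx, hx0, hxy⟩ := hM y hy hy0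
    exact (csInf_le hbdd ⟨x, hx, hx0, rfl⟩).trans hxy

theorem firstMin_orth_le_general (d : ℕ) (a : Fin (d + 1) → ℤ)
    (hpos : ∀ i, 0 < a i)
    (hmax : ∀ i, a i ≤ a (Fin.last d)) :
    firstMin (d + 1) {x : EuclideanSpace ℝ (Fin (d + 1)) |
        ∃ v : Fin (d + 1) → ℤ, (∑ i, v i * a i = 0) ∧ ∀ i, x i = (v i : ℝ)}
      ≤ Real.sqrt (d + 1) *
        firstMin d {y : EuclideanSpace ℝ (Fin d) |
          ∃ v : Fin (d + 1) → ℤ, (∑ i, v i * a i = 0) ∧ ∀ i : Fin d, y i = (v i.castSucc : ℝ)} := by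
  have hlast : ∀ v : Fin (d + 1) → ℤ, ∑ i, v i * a i = 0 →
      |(v (Fin.last d) : ℝ)| ≤ ∑ i : Fin d, |(v i.castSucc : ℝ)| := fun v hv =>
    abs_last_le_sum_abs_castSucc (v := fun i => (v i : ℝ)) (a := fun i => (a i : ℝ))
      (by exact_mod_cast hv)
      (fun i => by
        rw [abs_of_pos (by exact_mod_cast hpos i), abs_of_pos (by exact_mod_cast hpos _)]
        exact_mod_cast hmax i)
      (by exact_mod_cast (hpos _).ne')
  refine firstMin_le_mul_of_forall_exists (Real.sqrt_nonneg _) ?_ ?_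
  · rintro x ⟨v, hv, hx⟩ hx0
    refine ⟨WithLp.toLp 2 fun i => (v i.castSucc : ℝ), ⟨v, hv, fun _ => rfl⟩, fun hy0 => hx0 ?_⟩
    have hinit : ∀ i : Fin d, (v i.castSucc : ℝ) = 0 := fun i => congr($hy0 i)
    ext i
    rw [hx i]
    induction i using Fin.lastCases with
    | last => simpa [hinit] using hlast v hv
    | cast i => exact hinit i
  · rintro y ⟨v, hv, hy⟩ hy0
    refine ⟨WithLp.toLp 2 fun i => (v i : ℝ), ⟨v, hv, fun _ => rfl⟩, fun hx0 => hy0 ?_, ?_⟩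
    · ext i
      simpa [hy] using congr($hx0 i.castSucc)
    · exact EuclideanSpace.norm_le_sqrt_mul_norm_castSucc _ y hy (by simpa [hy] using hlast v hv)

/-- `λ₁(Λ_a) ≤ √(d+1) · λ₁(M_a)` where `M_a` is the projection of `Λ_a` onto the
first `d` coordinates and `a_{d+1} = max_i a_i`. -/
theorem firstMin_orth_le (d : ℕ) (a : Fin (d + 1) → ℤ)
    (hpos : ∀ i, 0 < a i) (hgcd : Finset.univ.gcd a = 1)
    (hmax : ∀ i, a i ≤ a (Fin.last d)) :
    firstMin (d + 1) {x : EuclideanSpace ℝ (Fin (d + 1)) |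
        ∃ v : Fin (d + 1) → ℤ, (∑ i, v i * a i = 0) ∧ ∀ i, x i = (v i : ℝ)}
      ≤ Real.sqrt (d + 1) *
        firstMin d {y : EuclideanSpace ℝ (Fin d) |
          ∃ v : Fin (d + 1) → ℤ, (∑ i, v i * a i = 0) ∧ ∀ i : Fin d, y i = (v i.castSucc : ℝ)} :=
  firstMin_orth_le_general d a hpos hmax
end

section
/- Let $d \geq 2$, let $0 < R < 1/2$, and let $c(R) = (R, R, \ldots, R, 1-R) \in \mathbb{R}^d$. Define $r(x) = \|(x_1, \ldots, x_{d-1})\| / x_d$ for $x$ with $x_d > 0$, and let $a(d,R) = \frac{(1-R)((d-1)R^2 - 2R + 1)^{1/2} - (d-1)^{1/2} R^2}{dR^2 - 2R + 1}$ and $r(d,R) = (a(d,R)^{-2} - 1)^{1/2}$. Then $\max\{r(x) : x \in B^d(c(R), R)\} = r(d,R)$. -/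
/-- Euclidean norm of the first `d-1` coordinates of `x ∈ ℝ^d`. -/
noncomputable def projNorm (d : ℕ) (x : EuclideanSpace ℝ (Fin d)) : ℝ :=
  Real.sqrt (∑ i ∈ Finset.univ.filter (fun i : Fin d => (i : ℕ) < d - 1), (x i) ^ 2)

/-- The ratio `r(x) = ‖(x_1,…,x_{d-1})‖ / x_d`. -/
noncomputable def ratioFn (d : ℕ) (hd : 0 < d) (x : EuclideanSpace ℝ (Fin d)) : ℝ :=
  projNorm d x / x ⟨d - 1, Nat.sub_lt hd one_pos⟩

/-- The center `c(R) = (R,…,R,1-R)`. -/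
noncomputable def centerR (d : ℕ) (R : ℝ) : EuclideanSpace ℝ (Fin d) :=
  WithLp.toLp 2 (fun i : Fin d => if (i : ℕ) = d - 1 then 1 - R else R)

/-- The quantity `a(d,R)`. -/
noncomputable def aDR (d : ℕ) (R : ℝ) : ℝ :=
  ((1 - R) * Real.sqrt (((d : ℝ) - 1) * R ^ 2 - 2 * R + 1) - Real.sqrt ((d : ℝ) - 1) * R ^ 2) /
    ((d : ℝ) * R ^ 2 - 2 * R + 1)

/-- The quantity `r(d,R) = (a(d,R)⁻² - 1)^{1/2}`. -/
noncomputable def rDR (d : ℕ) (R : ℝ) : ℝ :=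
  Real.sqrt ((aDR d R) ⁻¹ ^ 2 - 1)

/-!
Write `u = ‖(x₁, …, x_{d-1})‖` and `v = x_d`. The reverse triangle inequality in the first `d - 1`
coordinates sends the ball `B(c(R), R)` into the planar half-disk `u ≥ 0`,
`(u - √(d-1) R)² + (v - (1 - R))² ≤ R²`, and every point of that half-disk is attained by spreading
`u` evenly over the first `d - 1` coordinates. On the disk, `u / v` is largest on the tangent from
the origin: `a(d, R)` is the cosine of its angle with the `v`-axis, and `r(d, R) = √(a⁻² - 1)` is
the tangent of that angle.
-/

open Finset

/-- `(tangentCos s t R, tangentSin s t R)` is the unit normal `(a, b)` of the line `a u = b v`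
through the origin that is tangent to the circle of centre `(s, t)` and radius `R` on the side of
larger `u / v`; `√(s² + t² - R²)` is the length of the tangent segment. -/
noncomputable def tangentCos (s t R : ℝ) : ℝ :=
  (t * √(s ^ 2 + t ^ 2 - R ^ 2) - s * R) / (s ^ 2 + t ^ 2)

noncomputable def tangentSin (s t R : ℝ) : ℝ :=
  (s * √(s ^ 2 + t ^ 2 - R ^ 2) + t * R) / (s ^ 2 + t ^ 2)

def diskRatios (s t R : ℝ) : Set ℝ :=
  {y | ∃ u v : ℝ, 0 ≤ u ∧ (u - s) ^ 2 + (v - t) ^ 2 ≤ R ^ 2 ∧ y = u / v}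

section Planar

variable {s t R a b u v : ℝ}

lemma sub_le_of_sq_add_sq_le (hR : 0 ≤ R) (huv : (u - s) ^ 2 + (v - t) ^ 2 ≤ R ^ 2) :
    t - R ≤ v := by
  nlinarith [sq_nonneg (u - s), sq_nonneg (v - t + R)]

lemma mul_le_mul_of_sq_add_sq_le (hR : 0 ≤ R) (hab : a ^ 2 + b ^ 2 = 1)
    (htan : a * s - b * t = -R) (huv : (u - s) ^ 2 + (v - t) ^ 2 ≤ R ^ 2) :
    a * u ≤ b * v := by
  -- Cauchy–Schwarz: `(a (u - s) - b (v - t))² ≤ (a² + b²) ((u - s)² + (v - t)²) ≤ R²`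
  have hCS : a * (u - s) - b * (v - t) ≤ R := by
    nlinarith [sq_nonneg (a * (v - t) + b * (u - s)), sq_nonneg (a * (u - s) - b * (v - t) - R)]
  linarith

theorem isGreatest_diskRatios (hs : 0 ≤ s) (hR : 0 ≤ R) (hRt : R < t) (ha : 0 < a)
    (hab : a ^ 2 + b ^ 2 = 1) (htan : a * s - b * t = -R) :
    IsGreatest (diskRatios s t R) (b / a) := by
  have hv_pos : ∀ {u v : ℝ}, (u - s) ^ 2 + (v - t) ^ 2 ≤ R ^ 2 → 0 < v := fun huv => by
    linarith [sub_le_of_sq_add_sq_le hR huv]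
  constructor
  · have hdisk : (s + R * a - s) ^ 2 + (t - R * b - t) ^ 2 ≤ R ^ 2 :=
      le_of_eq (by linear_combination R ^ 2 * hab)
    refine ⟨s + R * a, t - R * b, by positivity, hdisk, ?_⟩
    rw [div_eq_div_iff ha.ne' (hv_pos hdisk).ne']
    linear_combination -htan - R * hab
  · rintro _ ⟨u, v, -, huv, rfl⟩
    rw [div_le_div_iff₀ (hv_pos huv) ha]
    linarith [mul_le_mul_of_sq_add_sq_le hR hab htan huv]

lemma tangentCos_sq_add_tangentSin_sq (h : R ^ 2 < s ^ 2 + t ^ 2) :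
    tangentCos s t R ^ 2 + tangentSin s t R ^ 2 = 1 := by
  have hQ := Real.sq_sqrt (sub_nonneg.2 h.le)
  have hN : s ^ 2 + t ^ 2 ≠ 0 := by nlinarith
  unfold tangentCos tangentSin
  field_simp
  linear_combination (s ^ 2 + t ^ 2) * hQ

lemma tangentCos_mul_sub_tangentSin_mul (hN : s ^ 2 + t ^ 2 ≠ 0) :
    tangentCos s t R * s - tangentSin s t R * t = -R := by
  unfold tangentCos tangentSin
  field_simp
  ring

lemma tangentCos_pos (hR : 0 ≤ R) (hRt : R < t) : 0 < tangentCos s t R := by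
  have hN : 0 < s ^ 2 + t ^ 2 := by nlinarith
  have hQ := Real.sq_sqrt (by nlinarith : 0 ≤ s ^ 2 + t ^ 2 - R ^ 2)
  have hQ0 := Real.sqrt_nonneg (s ^ 2 + t ^ 2 - R ^ 2)
  -- `(t Q)² - (s R)² = (t² - R²) (s² + t²)` with `Q` the tangent length
  have hsq : (s * R) ^ 2 < (t * √(s ^ 2 + t ^ 2 - R ^ 2)) ^ 2 := by
    nlinarith [mul_pos (by nlinarith : 0 < t ^ 2 - R ^ 2) hN]
  have : s * R < t * √(s ^ 2 + t ^ 2 - R ^ 2) :=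
    lt_of_pow_lt_pow_left₀ 2 (mul_nonneg (by linarith) hQ0) hsq
  exact div_pos (by linarith) hN

lemma tangentSin_nonneg (hs : 0 ≤ s) (hR : 0 ≤ R) (ht : 0 ≤ t) : 0 ≤ tangentSin s t R := by
  unfold tangentSin
  positivity

lemma sqrt_inv_sq_sub_one (ha : 0 < a) (hb : 0 ≤ b) (hab : a ^ 2 + b ^ 2 = 1) :
    √(a⁻¹ ^ 2 - 1) = b / a := by
  rw [← Real.sqrt_sq (div_nonneg hb ha.le)]
  congr 1
  field_simp
  linarith

end Planar

lemma sq_sqrt_sum_sq_sub_sqrt_sum_sq_le {ι : Type*} (S : Finset ι) (f g : ι → ℝ) :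
    (√(∑ i ∈ S, f i ^ 2) - √(∑ i ∈ S, g i ^ 2)) ^ 2 ≤ ∑ i ∈ S, (f i - g i) ^ 2 := by
  have hf := Real.sq_sqrt (sum_nonneg fun i (_ : i ∈ S) => sq_nonneg (f i))
  have hg := Real.sq_sqrt (sum_nonneg fun i (_ : i ∈ S) => sq_nonneg (g i))
  have hexpand : ∑ i ∈ S, (f i - g i) ^ 2
      = ∑ i ∈ S, f i ^ 2 - 2 * ∑ i ∈ S, f i * g i + ∑ i ∈ S, g i ^ 2 := by
    simp only [sub_sq, sum_add_distrib, sum_sub_distrib, mul_sum, mul_assoc]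
  nlinarith [Real.sum_mul_le_sqrt_mul_sqrt S f g]

def initCoords (d : ℕ) : Finset (Fin d) :=
  Finset.univ.filter (fun i : Fin d => (i : ℕ) < d - 1)

def lastCoord (d : ℕ) (hd : 0 < d) : Fin d :=
  ⟨d - 1, Nat.sub_lt hd one_pos⟩

section Coordinates

variable {d : ℕ}

lemma card_initCoords : (initCoords d).card = d - 1 := by
  simp [initCoords, Fin.card_filter_val_lt]

lemma sum_initCoords_const (hd : 0 < d) (c : ℝ) :
    ∑ _i ∈ initCoords d, c = ((d : ℝ) - 1) * c := by
  rw [sum_const, card_initCoords, nsmul_eq_mul, Nat.cast_sub hd, Nat.cast_one]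

lemma lastCoord_notMem_initCoords (hd : 0 < d) : lastCoord d hd ∉ initCoords d := by
  simp [initCoords, lastCoord]

lemma sum_eq_sum_initCoords_add_last (hd : 0 < d) (f : Fin d → ℝ) :
    ∑ i, f i = ∑ i ∈ initCoords d, f i + f (lastCoord d hd) := by
  have hcompl : univ.filter (fun i : Fin d => ¬ (i : ℕ) < d - 1) = {lastCoord d hd} := by
    ext i
    simp only [mem_filter, mem_univ, true_and, mem_singleton, lastCoord, Fin.ext_iff]
    omega
  rw [← sum_filter_add_sum_filter_not univ (fun i : Fin d => (i : ℕ) < d - 1), hcompl,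
    sum_singleton, initCoords]

lemma dist_sq_eq_sum_initCoords_add_last (hd : 0 < d) (x y : EuclideanSpace ℝ (Fin d)) :
    dist x y ^ 2 = ∑ i ∈ initCoords d, (x i - y i) ^ 2
      + (x (lastCoord d hd) - y (lastCoord d hd)) ^ 2 := by
  rw [EuclideanSpace.dist_eq, Real.sq_sqrt (by positivity),
    sum_eq_sum_initCoords_add_last hd]
  simp only [Real.dist_eq, sq_abs]

lemma centerR_apply_of_mem {R : ℝ} {i : Fin d} (hi : i ∈ initCoords d) : centerR d R i = R := by
  simp only [initCoords, mem_filter] at hi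
  simp [centerR, show (i : ℕ) ≠ d - 1 by omega]

lemma centerR_apply_lastCoord (hd : 0 < d) (R : ℝ) : centerR d R (lastCoord d hd) = 1 - R := by
  simp [centerR, lastCoord]

lemma projNorm_eq (x : EuclideanSpace ℝ (Fin d)) :
    projNorm d x = √(∑ i ∈ initCoords d, x i ^ 2) := rfl

lemma ratioFn_eq (hd : 0 < d) (x : EuclideanSpace ℝ (Fin d)) :
    ratioFn d hd x = projNorm d x / x (lastCoord d hd) := rfl

lemma sq_add_sq_le_of_mem_closedBall (hd : 0 < d) {R : ℝ} (hR : 0 ≤ R)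
    {x : EuclideanSpace ℝ (Fin d)} (hx : x ∈ Metric.closedBall (centerR d R) R) :
    (projNorm d x - √((d : ℝ) - 1) * R) ^ 2 + (x (lastCoord d hd) - (1 - R)) ^ 2 ≤ R ^ 2 := by
  have hcenter : √((d : ℝ) - 1) * R = √(∑ i ∈ initCoords d, centerR d R i ^ 2) := by
    rw [sum_congr rfl fun i hi => by rw [centerR_apply_of_mem hi], sum_initCoords_const hd,
      Real.sqrt_mul' _ (sq_nonneg R), Real.sqrt_sq hR]
  have hdist : dist x (centerR d R) ^ 2 ≤ R ^ 2 :=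
    pow_le_pow_left₀ dist_nonneg (Metric.mem_closedBall.1 hx) 2
  rw [dist_sq_eq_sum_initCoords_add_last hd, centerR_apply_lastCoord] at hdist
  rw [projNorm_eq, hcenter]
  linarith [sq_sqrt_sum_sq_sub_sqrt_sum_sq_le (initCoords d) x (centerR d R)]

lemma exists_mem_closedBall_ratioFn_eq (hd : 1 < d) {R u v : ℝ} (hR : 0 ≤ R) (hu : 0 ≤ u)
    (huv : (u - √((d : ℝ) - 1) * R) ^ 2 + (v - (1 - R)) ^ 2 ≤ R ^ 2) :
    ∃ x ∈ Metric.closedBall (centerR d R) R, ratioFn d (by omega) x = u / v := by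
  have hd0 : 0 < d := by omega
  have hd1 : (0 : ℝ) < (d : ℝ) - 1 := by
    have : (1 : ℝ) < d := by exact_mod_cast hd
    linarith
  have hsqrt := Real.sq_sqrt hd1.le
  set x : EuclideanSpace ℝ (Fin d) :=
    WithLp.toLp 2 (fun i => if i ∈ initCoords d then u / √((d : ℝ) - 1) else v)
  have hx_init : ∀ i ∈ initCoords d, x i = u / √((d : ℝ) - 1) := fun i hi => by simp [x, hi]
  have hx_last : x (lastCoord d hd0) = v := by
    simp [x, lastCoord_notMem_initCoords hd0]
  have hproj : projNorm d x = u := by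
    rw [projNorm_eq, sum_congr rfl fun i hi => by rw [hx_init i hi], sum_initCoords_const hd0,
      div_pow, hsqrt, mul_div_cancel₀ _ hd1.ne', Real.sqrt_sq hu]
  have hdist : dist x (centerR d R) ^ 2 = (u - √((d : ℝ) - 1) * R) ^ 2 + (v - (1 - R)) ^ 2 := by
    rw [dist_sq_eq_sum_initCoords_add_last hd0,
      sum_congr rfl fun i hi => by rw [hx_init i hi, centerR_apply_of_mem hi],
      sum_initCoords_const hd0, hx_last, centerR_apply_lastCoord]
    field_simp
    rw [hsqrt]
    ring
  refine ⟨x, Metric.mem_closedBall.2 ?_, by rw [ratioFn_eq, hproj, hx_last]⟩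
  exact pow_le_pow_iff_left₀ dist_nonneg hR two_ne_zero |>.1 (hdist ▸ huv)

theorem ratioFn_image_closedBall (hd : 1 < d) {R : ℝ} (hR : 0 ≤ R) :
    {y : ℝ | ∃ x ∈ Metric.closedBall (centerR d R) R, y = ratioFn d (by omega) x} =
      diskRatios (√((d : ℝ) - 1) * R) (1 - R) R := by
  ext y
  constructor
  · rintro ⟨x, hx, rfl⟩
    exact ⟨_, _, Real.sqrt_nonneg _, sq_add_sq_le_of_mem_closedBall (by omega) hR hx, rfl⟩
  · rintro ⟨u, v, hu, huv, rfl⟩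
    obtain ⟨x, hx, hratio⟩ := exists_mem_closedBall_ratioFn_eq hd hR hu huv
    exact ⟨x, hx, hratio.symm⟩

end Coordinates

lemma aDR_eq_tangentCos {d : ℕ} (hd : 1 ≤ d) (R : ℝ) :
    aDR d R = tangentCos (√((d : ℝ) - 1) * R) (1 - R) R := by
  have hsqrt := Real.sq_sqrt (sub_nonneg.2 (by exact_mod_cast hd : (1 : ℝ) ≤ d))
  have hN : (√((d : ℝ) - 1) * R) ^ 2 + (1 - R) ^ 2 = d * R ^ 2 - 2 * R + 1 := by
    rw [mul_pow, hsqrt]; ring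
  rw [aDR, tangentCos, hN]
  ring_nf

/-- Lemma 1 (isoperimetric lemma): the maximum of `r(x)` over the ball
`B(c(R), R)` equals `r(d,R)`. -/
theorem max_ratio_on_ball (d : ℕ) (hd : 2 ≤ d) (R : ℝ) (hR0 : 0 < R) (hR : R < 1 / 2) :
    IsGreatest {y : ℝ | ∃ x ∈ Metric.closedBall (centerR d R) R,
        y = ratioFn d (by omega) x} (rDR d R) := by
  set s := √((d : ℝ) - 1) * R
  have hs : 0 ≤ s := by positivity
  have hRt : R < 1 - R := by linarith
  have hN : s ^ 2 + (1 - R) ^ 2 ≠ 0 := by nlinarith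
  have hcos := tangentCos_pos hR0.le hRt (s := s)
  have hsin := tangentSin_nonneg hs hR0.le (by linarith : (0 : ℝ) ≤ 1 - R)
  have hunit := tangentCos_sq_add_tangentSin_sq (by nlinarith : R ^ 2 < s ^ 2 + (1 - R) ^ 2)
  rw [ratioFn_image_closedBall hd hR0.le, rDR, aDR_eq_tangentCos (by omega),
    sqrt_inv_sq_sub_one hcos hsin hunit]
  exact isGreatest_diskRatios hs hR0.le hRt hcos hunit (tangentCos_mul_sub_tangentSin_mul hN)
end
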